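/- If σ_α ≪ σ_δ in the sense that σ_α ≤ ε·σ_δ for some ε ∈ (0,1], then the scenario-2 jitter std satisfies σ_δ − σ_δ²/(σ_δ + ½σ_α + ½√(σ_α² + 4σ_δσ_α)) ≤ √(ε² /4 + ε)·σ_δ + (ε/2)·σ_δ. In particular it is at most (√ε + ε)·σ_δ. -/
import Mathlib


theorem stmt_6 (σδ σα ε : ℝ) (hδ : 0 < σδ) (hα : 0 < σα)
    (hε0 : 0 < ε) (hε1 : ε ≤ 1) (h : σα ≤ ε * σδ) :
    σδ - σδ^2 / (σδ + σα/2 + Real.sqrt (σα^2 + 4*σδ*σα) / 2)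
      ≤ Real.sqrt (ε^2/4 + ε) * σδ + (ε/2) * σδ ∧
    σδ - σδ^2 / (σδ + σα/2 + Real.sqrt (σα^2 + 4*σδ*σα) / 2)
      ≤ (Real.sqrt ε + ε) * σδ := by
  set s := Real.sqrt (σα^2 + 4*σδ*σα) with hsdef
  have hsnn : 0 ≤ s := Real.sqrt_nonneg _
  have hs2 : s^2 = σα^2 + 4*σδ*σα := Real.sq_sqrt (by positivity)
  have hD : 0 < σδ + σα/2 + s/2 := by linarith
  have key : σδ - σδ^2 / (σδ + σα/2 + s/2) ≤ σα/2 + s/2 := by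
    rw [sub_le_iff_le_add, add_comm, ← sub_le_iff_le_add, le_div_iff₀ hD]
    nlinarith [sq_nonneg (σα/2 + s/2)]
  set q := Real.sqrt (ε^2/4 + ε) with hqdef
  have hqnn : 0 ≤ q := Real.sqrt_nonneg _
  have hq2 : q^2 = ε^2/4 + ε := Real.sq_sqrt (by positivity)
  have hqpos : 0 < q := by
    rw [hqdef]; exact Real.sqrt_pos.mpr (by positivity)
  have hse : s ≤ 2*q*σδ := by
    have h1 : s^2 ≤ (2*q*σδ)^2 := by nlinarith
    nlinarith [mul_pos hqpos hδ]
  have part1 : σδ - σδ^2 / (σδ + σα/2 + s/2) ≤ q * σδ + (ε/2) * σδ := by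
    have hα2 : σα/2 ≤ (ε/2) * σδ := by linarith
    linarith
  refine ⟨part1, ?_⟩
  have hrε : 0 ≤ Real.sqrt ε := Real.sqrt_nonneg _
  have hrε2 : (Real.sqrt ε)^2 = ε := Real.sq_sqrt hε0.le
  have hqle : q ≤ Real.sqrt ε + ε/2 := by
    nlinarith [mul_nonneg hrε hε0.le]
  have : q * σδ ≤ (Real.sqrt ε + ε/2) * σδ :=
    mul_le_mul_of_nonneg_right hqle hδ.le
  nlinarith
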